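/- Simulation lemma underlying the Lipschitz aUCT bias term: let S and A be nonempty finite sets, γ ∈ [0,1), and let (R,P) and (R',P') be two MDPs on (S,A) with Bellman optimality operators T and T' and fixed points Q* = TQ* and Q*' = T'Q*'. If |R'(s,a)| ≤ R_max for all (s,a), then ‖Q* − Q*'‖_∞ ≤ (1/(1−γ)) · max_{(s,a)} [ |R(s,a) − R'(s,a)| + γ·(R_max/(1−γ)) · Σ_{s'} |P(s'|s,a) − P'(s'|s,a)| ]. -/

import Mathlib

/-! The difference of the two fixed points satisfies
`Q* - Q*' = (R - R') + γ P (V* - V*') + γ (P - P') V*'`, where `V` is the greedy value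
`s ↦ max_a Q(s,a)`. Since `Q ↦ V` is 1-Lipschitz in the sup norm and `P` is stochastic,
the middle term is at most `γ ‖Q* - Q*'‖`; the last one is at most
`γ (Σ_{s'} |P - P'|) ‖Q*'‖`, and
`‖Q*'‖ ≤ R_max / (1 - γ)` because `Q*'` is a fixed point of a `γ`-contraction with rewards
bounded by `R_max`. Solving `x ≤ ε + γ x` for `x = ‖Q* - Q*'‖` gives the bound. -/

open Finset

/-- The Bellman optimality operator for an MDP `(R, P)` on finite state/action
spaces with discount factor `γ`:
`(T Q)(s,a) = R(s,a) + γ · Σ_{s'} P(s'|s,a) · max_{a'} Q(s',a')`. -/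
noncomputable def bellmanOp {S A : Type*} [Fintype S] [Fintype A] [Nonempty A]
    (γ : ℝ) (R : S → A → ℝ) (P : S → A → S → ℝ) (Q : S × A → ℝ) : S × A → ℝ :=
  fun p =>
    R p.1 p.2 + γ * ∑ s' : S, P p.1 p.2 s' *
      (Finset.univ.sup' Finset.univ_nonempty (fun a' : A => Q (s', a')))

theorem Finset.abs_sup'_sub_sup'_le {ι α : Type*} [AddCommGroup α] [LinearOrder α]
    [IsOrderedAddMonoid α] {s : Finset ι} (hs : s.Nonempty) {f g : ι → α} {c : α}
    (h : ∀ i ∈ s, |f i - g i| ≤ c) :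
    |s.sup' hs f - s.sup' hs g| ≤ c := by
  rw [abs_sub_le_iff, sub_le_iff_le_add, sub_le_iff_le_add]
  constructor
  · exact sup'_le _ _ fun i hi => (sub_le_iff_le_add.mp (abs_sub_le_iff.mp (h i hi)).1).trans
      (add_le_add le_rfl (le_sup' g hi))
  · exact sup'_le _ _ fun i hi => (sub_le_iff_le_add.mp (abs_sub_le_iff.mp (h i hi)).2).trans
      (add_le_add le_rfl (le_sup' f hi))

theorem abs_sum_mul_le_sum_abs_mul_norm {ι : Type*} [Fintype ι] (d v : ι → ℝ) :
    |∑ i, d i * v i| ≤ (∑ i, |d i|) * ‖v‖ := by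
  calc |∑ i, d i * v i| ≤ ∑ i, |d i| * |v i| := by
        simpa only [abs_mul] using abs_sum_le_sum_abs (fun i => d i * v i) univ
    _ ≤ ∑ i, |d i| * ‖v‖ := by
        gcongr with i
        exact norm_le_pi_norm v i
    _ = (∑ i, |d i|) * ‖v‖ := (sum_mul ..).symm

theorem abs_sum_mul_le_norm_of_stochastic {ι : Type*} [Fintype ι] {p : ι → ℝ}
    (hp0 : ∀ i, 0 ≤ p i) (hp1 : ∑ i, p i = 1) (v : ι → ℝ) :
    |∑ i, p i * v i| ≤ ‖v‖ := by
  simpa only [abs_of_nonneg (hp0 _), hp1, one_mul] using abs_sum_mul_le_sum_abs_mul_norm p v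

theorem le_div_one_sub_of_le_add_mul {x c γ : ℝ} (hγ : γ < 1) (h : x ≤ c + γ * x) :
    x ≤ c / (1 - γ) := by
  rw [le_div_iff₀ (sub_pos.mpr hγ)]
  linarith

section Bellman

variable {S A : Type*} [Fintype S] [Fintype A] [Nonempty A]

noncomputable def greedyValue (Q : S × A → ℝ) : S → ℝ :=
  fun s => univ.sup' univ_nonempty fun a => Q (s, a)

theorem bellmanOp_apply (γ : ℝ) (R : S → A → ℝ) (P : S → A → S → ℝ) (Q : S × A → ℝ)
    (p : S × A) :
    bellmanOp γ R P Q p = R p.1 p.2 + γ * ∑ s', P p.1 p.2 s' * greedyValue Q s' :=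
  rfl

theorem norm_greedyValue_sub_le (Q Q' : S × A → ℝ) :
    ‖greedyValue Q - greedyValue Q'‖ ≤ ‖Q - Q'‖ :=
  (pi_norm_le_iff_of_nonneg (norm_nonneg _)).mpr fun s =>
    abs_sup'_sub_sup'_le _ fun a _ => norm_le_pi_norm (Q - Q') (s, a)

theorem norm_greedyValue_le (Q : S × A → ℝ) : ‖greedyValue Q‖ ≤ ‖Q‖ := by
  have hzero : greedyValue (0 : S × A → ℝ) = 0 := funext fun _ => sup'_const _ _
  simpa only [hzero, sub_zero] using norm_greedyValue_sub_le Q 0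

variable {γ : ℝ} {P : S → A → S → ℝ}

theorem abs_bellmanOp_le (hγ : 0 ≤ γ) (hP0 : ∀ s a s', 0 ≤ P s a s')
    (hP1 : ∀ s a, ∑ s', P s a s' = 1) (R : S → A → ℝ) (Q : S × A → ℝ) (p : S × A) :
    |bellmanOp γ R P Q p| ≤ |R p.1 p.2| + γ * ‖Q‖ := by
  rw [bellmanOp_apply]
  refine (abs_add_le _ _).trans ?_
  rw [abs_mul, abs_of_nonneg hγ]
  gcongr
  exact (abs_sum_mul_le_norm_of_stochastic (hP0 _ _) (hP1 _ _) _).trans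
    (norm_greedyValue_le Q)

theorem norm_le_of_bellmanOp_eq [Nonempty S] (hγ0 : 0 ≤ γ) (hγ1 : γ < 1)
    (hP0 : ∀ s a s', 0 ≤ P s a s') (hP1 : ∀ s a, ∑ s', P s a s' = 1)
    {R : S → A → ℝ} {Rmax : ℝ} (hR : ∀ s a, |R s a| ≤ Rmax) {Q : S × A → ℝ}
    (hfix : bellmanOp γ R P Q = Q) :
    ‖Q‖ ≤ Rmax / (1 - γ) := by
  refine le_div_one_sub_of_le_add_mul hγ1 ((pi_norm_le_iff_of_nonempty _).mpr fun p => ?_)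
  have hp := abs_bellmanOp_le hγ0 hP0 hP1 R Q p
  rw [hfix] at hp
  exact hp.trans (by grw [hR])

theorem abs_bellmanOp_sub_bellmanOp_le (hγ : 0 ≤ γ) (hP0 : ∀ s a s', 0 ≤ P s a s')
    (hP1 : ∀ s a, ∑ s', P s a s' = 1) (R R' : S → A → ℝ) (P' : S → A → S → ℝ)
    (Q Q' : S × A → ℝ) (p : S × A) :
    |bellmanOp γ R P Q p - bellmanOp γ R' P' Q' p| ≤
      |R p.1 p.2 - R' p.1 p.2| + γ * ‖Q - Q'‖ +
        γ * ((∑ s', |P p.1 p.2 s' - P' p.1 p.2 s'|) * ‖Q'‖) := by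
  have hsplit : bellmanOp γ R P Q p - bellmanOp γ R' P' Q' p =
      (R p.1 p.2 - R' p.1 p.2)
        + γ * ∑ s', P p.1 p.2 s' * (greedyValue Q - greedyValue Q') s'
        + γ * ∑ s', (P p.1 p.2 s' - P' p.1 p.2 s') * greedyValue Q' s' := by
    simp only [bellmanOp_apply, Pi.sub_apply, mul_sub, sub_mul, sum_sub_distrib]
    ring
  have hcontract : |∑ s', P p.1 p.2 s' * (greedyValue Q - greedyValue Q') s'| ≤ ‖Q - Q'‖ :=
    (abs_sum_mul_le_norm_of_stochastic (hP0 _ _) (hP1 _ _) _).trans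
      (norm_greedyValue_sub_le Q Q')
  have hperturb : |∑ s', (P p.1 p.2 s' - P' p.1 p.2 s') * greedyValue Q' s'| ≤
      (∑ s', |P p.1 p.2 s' - P' p.1 p.2 s'|) * ‖Q'‖ :=
    (abs_sum_mul_le_sum_abs_mul_norm _ _).trans
      (mul_le_mul_of_nonneg_left (norm_greedyValue_le Q') (sum_nonneg fun _ _ => abs_nonneg _))
  rw [hsplit]
  refine (abs_add_three _ _ _).trans ?_
  rw [abs_mul, abs_mul, abs_of_nonneg hγ]
  gcongr

end Bellman

/-- Simulation lemma underlying the Lipschitz aUCT bias term.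
For two MDPs `(R,P)` and `(R',P')` with optimal value functions `Q*` and `Q*'`,
and `|R'(s,a)| ≤ R_max`,
`‖Q* − Q*'‖_∞ ≤ (1/(1−γ)) · max_{(s,a)} [ |R(s,a) − R'(s,a)|
   + γ·(R_max/(1−γ)) · Σ_{s'} |P(s'|s,a) − P'(s'|s,a)| ]`. -/
theorem simulation_lemma {S A : Type*} [Fintype S] [Fintype A]
    [Nonempty S] [Nonempty A]
    (γ : ℝ) (hγ0 : 0 ≤ γ) (hγ1 : γ < 1)
    (R R' : S → A → ℝ) (P P' : S → A → S → ℝ)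
    (hP0 : ∀ s a s', 0 ≤ P s a s') (hP1 : ∀ s a, ∑ s' : S, P s a s' = 1)
    (hP0' : ∀ s a s', 0 ≤ P' s a s') (hP1' : ∀ s a, ∑ s' : S, P' s a s' = 1)
    (Rmax : ℝ) (hR' : ∀ s a, |R' s a| ≤ Rmax)
    (Qstar Qstar' : S × A → ℝ)
    (hfix : bellmanOp γ R P Qstar = Qstar)
    (hfix' : bellmanOp γ R' P' Qstar' = Qstar') :
    ‖Qstar - Qstar'‖ ≤ (1 / (1 - γ)) *
      (Finset.univ.sup' Finset.univ_nonempty (fun p : S × A =>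
        |R p.1 p.2 - R' p.1 p.2| +
          γ * (Rmax / (1 - γ)) * ∑ s' : S, |P p.1 p.2 s' - P' p.1 p.2 s'|)) := by
  have hbound : ‖Qstar'‖ ≤ Rmax / (1 - γ) :=
    norm_le_of_bellmanOp_eq hγ0 hγ1 hP0' hP1' hR' hfix'
  rw [one_div_mul_eq_div]
  refine le_div_one_sub_of_le_add_mul hγ1 ((pi_norm_le_iff_of_nonempty _).mpr fun p => ?_)
  have hstep := abs_bellmanOp_sub_bellmanOp_le hγ0 hP0 hP1 R R' P' Qstar Qstar' p
  rw [hfix, hfix'] at hstep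
  rw [Real.norm_eq_abs, Pi.sub_apply]
  calc |Qstar p - Qstar' p|
      ≤ |R p.1 p.2 - R' p.1 p.2| + γ * ‖Qstar - Qstar'‖ +
          γ * ((∑ s', |P p.1 p.2 s' - P' p.1 p.2 s'|) * (Rmax / (1 - γ))) := by
        grw [hstep, hbound]
    _ = (|R p.1 p.2 - R' p.1 p.2| +
          γ * (Rmax / (1 - γ)) * ∑ s', |P p.1 p.2 s' - P' p.1 p.2 s'|) +
          γ * ‖Qstar - Qstar'‖ := by ring
    _ ≤ _ := by
        grw [le_sup' (fun p : S × A => |R p.1 p.2 - R' p.1 p.2| +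
          γ * (Rmax / (1 - γ)) * ∑ s', |P p.1 p.2 s' - P' p.1 p.2 s'|) (mem_univ p)]
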